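/- For any choice program P, the GZ operator is ⪯A_i-monotonic when restricted to consistent pairs: if x1 ⊆ y1, x2 ⊆ y2, x1 ⊆ x2 and y2 ⊆ y1, then HD^{GZ,l}_P(x1,y1) ⊆ HD^{GZ,l}_P(x2,y2) and IC^{GZ,l}_P(x1,y1) ⪯S IC^{GZ,l}_P(x2,y2). -/

import Mathlib

/-!
On a consistent pair with `x1 ⊆ x2 ⊆ y2 ⊆ y1`, a body condition `x1 ∩ D = y1 ∩ D` squeezes
`x2 ∩ D` and `y2 ∩ D` to the same set, so every rule that fires for `(x1, y1)` also fires for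
`(x2, y2)`. Enlarging the set of heads can only shrink `ICfrom` in the Smyth order: a model of
the larger set of heads, cut down to the domains of the smaller one, still satisfies all of them.
-/

/-- A choice atom: a domain of atoms together with a family of satisfiers. -/
structure ChoiceAtom (A : Type*) where
  dom : Set A
  sat : Set (Set A)

/-- A choice rule: a head choice atom and a finite list of body choice atoms. -/
structure ChoiceRule (A : Type*) where
  head : ChoiceAtom A
  body : List (ChoiceAtom A)

variable {A : Type*}

/-- `x` satisfies the choice atom `C` iff `x ∩ dom(C) ∈ sat(C)`. -/
def sats (x : Set A) (C : ChoiceAtom A) : Prop := x ∩ C.dom ∈ C.sat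

/-- The rules of `P` whose bodies are all satisfied by `x`. -/
def applicable (P : Set (ChoiceRule A)) (x : Set A) : Set (ChoiceRule A) :=
  {r | r ∈ P ∧ ∀ Ci ∈ r.body, sats x Ci}

/-- Heads of `x`-applicable rules. -/
def HD (P : Set (ChoiceRule A)) (x : Set A) : Set (ChoiceAtom A) :=
  {C | ∃ r ∈ applicable P x, r.head = C}

/-- Interpretations within the union of the domains of a set of heads that satisfy all heads. -/
def ICfrom (H : Set (ChoiceAtom A)) : Set (Set A) :=
  {z | z ⊆ (⋃ C ∈ H, C.dom) ∧ ∀ C ∈ H, sats z C}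

/-- The immediate consequence operator for choice programs. -/
def ICP (P : Set (ChoiceRule A)) (x : Set A) : Set (Set A) := ICfrom (HD P x)

/-- Heads of rules whose bodies are satisfied by every `z` with `x ⊆ z ⊆ y`. -/
def HDlpst (P : Set (ChoiceRule A)) (x y : Set A) : Set (ChoiceAtom A) :=
  {C | ∃ r ∈ P, r.head = C ∧ ∀ z : Set A, x ⊆ z → z ⊆ y → ∀ Ci ∈ r.body, sats z Ci}

/-- The lower bound of the LPST operator. -/
def IClpstL (P : Set (ChoiceRule A)) (x y : Set A) : Set (Set A) := ICfrom (HDlpst P x y)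

/-- The upper bound of the LPST/MR operators, i.e. the ultimate lower/upper bound:
`⋃_{x ⊆ z ⊆ y} IC_P(z)`. -/
def ICuU (P : Set (ChoiceRule A)) (x y : Set A) : Set (Set A) :=
  {w | ∃ z : Set A, x ⊆ z ∧ z ⊆ y ∧ w ∈ ICP P z}

/-- Heads of rules whose bodies are satisfied by `y` and by some `z ⊆ x`. -/
def HDmr (P : Set (ChoiceRule A)) (x y : Set A) : Set (ChoiceAtom A) :=
  {C | ∃ r ∈ P, r.head = C ∧ (∀ Ci ∈ r.body, sats y Ci) ∧
        ∃ z : Set A, z ⊆ x ∧ ∀ Ci ∈ r.body, sats z Ci}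

/-- The lower bound of the MR operator. -/
def ICmrL (P : Set (ChoiceRule A)) (x y : Set A) : Set (Set A) := ICfrom (HDmr P x y)

/-- Heads of rules s.t. `x ∩ dom(Ci) = y ∩ dom(Ci) ∈ sat(Ci)` for every body atom `Ci`. -/
def HDgz (P : Set (ChoiceRule A)) (x y : Set A) : Set (ChoiceAtom A) :=
  {C | ∃ r ∈ P, r.head = C ∧
        ∀ Ci ∈ r.body, x ∩ Ci.dom = y ∩ Ci.dom ∧ x ∩ Ci.dom ∈ Ci.sat}

/-- The lower (= upper) bound of the GZ operator. -/
def ICgzL (P : Set (ChoiceRule A)) (x y : Set A) : Set (Set A) := ICfrom (HDgz P x y)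

/-- Smyth preorder on families of sets of atoms. -/
def smyth (X Y : Set (Set A)) : Prop := ∀ y ∈ Y, ∃ x ∈ X, x ⊆ y

/-- Hoare preorder on families of sets of atoms. -/
def hoare (X Y : Set (Set A)) : Prop := ∀ x ∈ X, ∃ y ∈ Y, x ⊆ y

/-- The positive literal `a` as a choice atom `({a},{{a}})`. -/
def isPosLit (a : A) (C : ChoiceAtom A) : Prop := C.dom = {a} ∧ C.sat = {{a}}

/-- The negative literal `¬a` as a choice atom `({a},{∅})`. -/
def isNegLit (a : A) (C : ChoiceAtom A) : Prop := C.dom = {a} ∧ C.sat = {(∅ : Set A)}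

/-- A choice atom is a literal if it is a positive or negative literal. -/
def isLiteral (C : ChoiceAtom A) : Prop := ∃ a : A, isPosLit a C ∨ isNegLit a C

/-- A choice program is normal if all body atoms of all rules are literals. -/
def normalProgram (P : Set (ChoiceRule A)) : Prop :=
  ∀ r ∈ P, ∀ Ci ∈ r.body, isLiteral Ci

/-- `x` is a model of `P`. -/
def isModel (P : Set (ChoiceRule A)) (x : Set A) : Prop :=
  ∀ r ∈ P, (∀ Ci ∈ r.body, sats x Ci) → sats x r.head

lemma eq_and_eq_of_le_of_le_of_le {α : Type*} [PartialOrder α] {a b c d : α}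
    (hab : a ≤ b) (hbc : b ≤ c) (hcd : c ≤ d) (had : a = d) : b = c ∧ b = a := by
  subst had
  have hba : b = a := le_antisymm (hbc.trans hcd) hab
  have hca : c = a := le_antisymm hcd (hab.trans hbc)
  exact ⟨hba.trans hca.symm, hba⟩

lemma HDgz_subset_HDgz {P : Set (ChoiceRule A)} {x1 y1 x2 y2 : Set A}
    (hx : x1 ⊆ x2) (hc2 : x2 ⊆ y2) (hy : y2 ⊆ y1) : HDgz P x1 y1 ⊆ HDgz P x2 y2 := by
  rintro C ⟨r, hr, rfl, hbody⟩
  refine ⟨r, hr, rfl, fun Ci hCi => ?_⟩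
  obtain ⟨heq, hsat⟩ := hbody Ci hCi
  obtain ⟨hxy, hx21⟩ := eq_and_eq_of_le_of_le_of_le (Set.inter_subset_inter_left Ci.dom hx)
    (Set.inter_subset_inter_left Ci.dom hc2) (Set.inter_subset_inter_left Ci.dom hy) heq
  exact ⟨hxy, hx21 ▸ hsat⟩

lemma sats_inter_iff {C : ChoiceAtom A} {w s : Set A} (h : C.dom ⊆ s) :
    sats (w ∩ s) C ↔ sats w C := by
  rw [sats, sats, Set.inter_assoc, Set.inter_eq_self_of_subset_right h]

lemma smyth_ICfrom_of_subset {H H' : Set (ChoiceAtom A)} (h : H ⊆ H') :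
    smyth (ICfrom H) (ICfrom H') := by
  rintro w ⟨-, hw⟩
  refine ⟨w ∩ ⋃ C ∈ H, C.dom, ⟨Set.inter_subset_right, fun C hC => ?_⟩, Set.inter_subset_left⟩
  exact (sats_inter_iff (Set.subset_biUnion_of_mem hC)).2 (hw C (h hC))

theorem gz_Ai_monotonic_general (P : Set (ChoiceRule A)) (x1 y1 x2 y2 : Set A)
    (hc2 : x2 ⊆ y2) (hx : x1 ⊆ x2) (hy : y2 ⊆ y1) :
    HDgz P x1 y1 ⊆ HDgz P x2 y2 ∧ smyth (ICgzL P x1 y1) (ICgzL P x2 y2) := by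
  have hHD : HDgz P x1 y1 ⊆ HDgz P x2 y2 := HDgz_subset_HDgz hx hc2 hy
  exact ⟨hHD, smyth_ICfrom_of_subset hHD⟩

/-- the GZ operator is `⪯A_i`-monotonic on consistent pairs. -/
theorem gz_Ai_monotonic (P : Set (ChoiceRule A)) (x1 y1 x2 y2 : Set A)
    (hc1 : x1 ⊆ y1) (hc2 : x2 ⊆ y2) (hx : x1 ⊆ x2) (hy : y2 ⊆ y1) :
    HDgz P x1 y1 ⊆ HDgz P x2 y2 ∧ smyth (ICgzL P x1 y1) (ICgzL P x2 y2) :=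
  gz_Ai_monotonic_general P x1 y1 x2 y2 hc2 hx hy
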